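/- arXiv:1905.07218 — 5 statements merged into one kernel-verified Lean document; each statement's English description precedes it below -/
import Mathlib

section
/- Let (Ω, 𝔉, P) be a probability space, H a real Hilbert space, and N a positive integer. Let Y = (Y_1, …, Y_N) be a centered square-integrable random vector in ℝ^N whose covariance matrix M (with M_{ij} = E[Y_i Y_j]) is invertible. For a centered Bochner square-integrable H-valued random variable X, define the best linear unbiased predictor Π(X|Y) = Σ_{i,j=1}^N (M^{-1})_{ij} Y_i · E[Y_j X] (an H-valued random variable, where E[Y_j X] is a Bochner integral). Let (X_t)_{t∈ℤ} be centered square-integrable H-valued random variables with sup_t E‖X_t‖² < ∞, let (𝓑_k)_{k∈ℤ} be continuous linear functionals on H with Σ_{k∈ℤ} ‖𝓑_k‖ < ∞, let e be a centered square-integrable real random variable independent of Y, and set Z = Σ_{k∈ℤ} 𝓑_k(X_{s−k}) + e for a fixed s ∈ ℤ (the series converges absolutely almost surely and in L¹). Then, almost surely, Π(Z|Y) = Σ_{k∈ℤ} 𝓑_k( Π(X_{s−k}|Y) ), where Π(Z|Y) = Σ_{i,j} (M^{-1})_{ij} Y_i E[Y_j Z]. -/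
/-!
Only the cross moments `E[Y_j Z]` enter `Π(Z|Y)`. Since `Σ ‖𝓑_k‖ < ∞` and the `E‖Y_j X_t‖`
are bounded uniformly in `t`, the series `Y_j Z = Σ_k 𝓑_k(Y_j X_{s-k}) + Y_j e` can be integrated
term by term, and `E[Y_j e] = E[Y_j] E[e] = 0` by independence; hence
`E[Y_j Z] = Σ_k 𝓑_k(E[Y_j X_{s-k}])`. The predictor is linear in these moments, so the filter
passes through it, even pointwise.
-/

open MeasureTheory ProbabilityTheory
open scoped ENNReal

/-- The best linear unbiased predictor of a centered square-integrable `H`-valued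
random variable `X` given the centered random vector `Y`, with `Minv` the inverse
of the covariance matrix of `Y`:
`Π(X|Y) = Σ_{i,j} (M⁻¹)_{ij} Y_i • E[Y_j • X]`. -/
noncomputable def blup {Ω : Type*} [MeasureSpace Ω] {N : ℕ}
    (Y : Fin N → Ω → ℝ) (Minv : Matrix (Fin N) (Fin N) ℝ)
    {H : Type*} [NormedAddCommGroup H] [NormedSpace ℝ H]
    (X : Ω → H) : Ω → H :=
  fun ω => ∑ i : Fin N, ∑ j : Fin N,
    (Minv i j * Y i ω) • (∫ ω', Y j ω' • X ω')

section TermwiseIntegration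

variable {Ω : Type*} [MeasurableSpace Ω] {μ : Measure Ω} {ι : Type*}

theorem integrable_tsum_of_summable_integral_norm [Countable ι] {E : Type*}
    [NormedAddCommGroup E] [CompleteSpace E] {F : ι → Ω → E} (hF_int : ∀ i, Integrable (F i) μ)
    (hF_sum : Summable fun i => ∫ ω, ‖F i ω‖ ∂μ) :
    Integrable (fun ω => ∑' i, F i ω) μ := by
  have hmeas : ∀ i, AEMeasurable (fun ω => ‖F i ω‖ₑ) μ :=
    fun i => (hF_int i).aestronglyMeasurable.enorm
  have hfinite : ∑' i, ∫⁻ ω, ‖F i ω‖ₑ ∂μ ≠ ∞ := by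
    simp_rw [← ofReal_integral_norm_eq_lintegral_enorm (hF_int _)]
    rw [← ENNReal.ofReal_tsum_of_nonneg (fun i => integral_nonneg fun _ => norm_nonneg _) hF_sum]
    exact ENNReal.ofReal_ne_top
  have hsummable : ∀ᵐ ω ∂μ, Summable fun i => ‖F i ω‖ := by
    refine summable_norm_of_tsum_eLpNorm_ne_top le_rfl (fun i => (hF_int i).1) ?_
    simpa only [eLpNorm_one_eq_lintegral_enorm] using hfinite
  refine ⟨aestronglyMeasurable_of_tendsto_ae Filter.atTop (f := fun t ω => ∑ i ∈ t, F i ω)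
    (fun t => t.aestronglyMeasurable_fun_sum fun i _ => (hF_int i).1) ?_, ?_⟩
  · filter_upwards [hsummable] with ω hω using hω.of_norm.hasSum
  · calc ∫⁻ ω, ‖∑' i, F i ω‖ₑ ∂μ ≤ ∫⁻ ω, ∑' i, ‖F i ω‖ₑ ∂μ :=
          lintegral_mono fun _ => enorm_tsum_le_tsum_enorm
      _ = ∑' i, ∫⁻ ω, ‖F i ω‖ₑ ∂μ := lintegral_tsum hmeas
      _ < ∞ := hfinite.lt_top

variable {E F : Type*} [NormedAddCommGroup E] [NormedSpace ℝ E]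
  [NormedAddCommGroup F] [NormedSpace ℝ F]
  {B : ι → E →L[ℝ] F} {G : ι → Ω → E} {D : ℝ}

theorem summable_integral_norm_clm_apply (hB : Summable fun k => ‖B k‖)
    (hG : ∀ k, Integrable (G k) μ) (hD : ∀ k, ∫ ω, ‖G k ω‖ ∂μ ≤ D) :
    Summable fun k => ∫ ω, ‖B k (G k ω)‖ ∂μ := by
  refine (hB.mul_right D).of_nonneg_of_le (fun k => integral_nonneg fun _ => norm_nonneg _)
    fun k => ?_
  calc ∫ ω, ‖B k (G k ω)‖ ∂μ ≤ ∫ ω, ‖B k‖ * ‖G k ω‖ ∂μ :=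
        integral_mono ((B k).integrable_comp (hG k)).norm ((hG k).norm.const_mul _)
          fun ω => (B k).le_opNorm (G k ω)
    _ = ‖B k‖ * ∫ ω, ‖G k ω‖ ∂μ := integral_const_mul _ _
    _ ≤ ‖B k‖ * D := mul_le_mul_of_nonneg_left (hD k) (norm_nonneg _)

theorem integrable_tsum_clm_apply [Countable ι] [CompleteSpace F]
    (hB : Summable fun k => ‖B k‖)
    (hG : ∀ k, Integrable (G k) μ) (hD : ∀ k, ∫ ω, ‖G k ω‖ ∂μ ≤ D) :
    Integrable (fun ω => ∑' k, B k (G k ω)) μ :=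
  integrable_tsum_of_summable_integral_norm (fun k => (B k).integrable_comp (hG k))
    (summable_integral_norm_clm_apply hB hG hD)

theorem hasSum_clm_apply_integral [Countable ι] [CompleteSpace E] [CompleteSpace F]
    (hB : Summable fun k => ‖B k‖)
    (hG : ∀ k, Integrable (G k) μ) (hD : ∀ k, ∫ ω, ‖G k ω‖ ∂μ ≤ D) :
    HasSum (fun k => B k (∫ ω, G k ω ∂μ)) (∫ ω, ∑' k, B k (G k ω) ∂μ) := by
  simp_rw [← (B _).integral_comp_comm (hG _)]
  exact hasSum_integral_of_summable_integral_norm (fun k => (B k).integrable_comp (hG k))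
    (summable_integral_norm_clm_apply hB hG hD)

end TermwiseIntegration

theorem integral_norm_smul_le_of_memLp_two {Ω E : Type*} [MeasurableSpace Ω]
    {μ : Measure Ω} [NormedAddCommGroup E] [NormedSpace ℝ E] {Y : Ω → ℝ} {X : Ω → E}
    (hY : MemLp Y 2 μ) (hX : MemLp X 2 μ) :
    ∫ ω, ‖Y ω • X ω‖ ∂μ ≤ ((∫ ω, Y ω ^ 2 ∂μ) + ∫ ω, ‖X ω‖ ^ 2 ∂μ) / 2 := by
  have hYX : Integrable (fun ω => Y ω • X ω) μ := memLp_one_iff_integrable.mp (hX.smul hY)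
  rw [← integral_add hY.integrable_sq hX.norm.integrable_sq, ← integral_div]
  refine integral_mono hYX.norm ((hY.integrable_sq.add hX.norm.integrable_sq).div_const 2)
    fun ω => ?_
  have := two_mul_le_add_sq |Y ω| ‖X ω‖
  rw [sq_abs] at this
  simp only [norm_smul, Real.norm_eq_abs]
  linarith

theorem blup_eq_tsum_of_hasSum {Ω : Type*} [MeasureSpace Ω] {N : ℕ}
    {Y : Fin N → Ω → ℝ} {Minv : Matrix (Fin N) (Fin N) ℝ}
    {H F : Type*} [NormedAddCommGroup H] [NormedSpace ℝ H] [NormedAddCommGroup F]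
    [NormedSpace ℝ F] {ι : Type*} {B : ι → H →L[ℝ] F} {X : ι → Ω → H} {Z : Ω → F}
    (hZ : ∀ j, HasSum (fun k => B k (∫ ω, Y j ω • X k ω)) (∫ ω, Y j ω • Z ω)) (ω : Ω) :
    blup Y Minv Z ω = ∑' k, B k (blup Y Minv (X k) ω) := by
  refine (HasSum.tsum_eq ?_).symm
  simp only [blup, map_sum, map_smul]
  exact hasSum_sum fun i _ => hasSum_sum fun j _ => (hZ j).const_smul _

theorem blup_lagged_regression_general
    {Ω : Type*} [MeasureSpace Ω]
    {H : Type*} [NormedAddCommGroup H] [InnerProductSpace ℝ H] [CompleteSpace H]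
    {N : ℕ}
    (Y : Fin N → Ω → ℝ)
    (hY2 : ∀ i, MemLp (Y i) 2)
    (hYcent : ∀ i, (∫ ω, Y i ω) = 0)
    (M : Matrix (Fin N) (Fin N) ℝ)
    (X : ℤ → Ω → H)
    (hX2 : ∀ t, MemLp (X t) 2)
    (hXbdd : ∃ C : ℝ, ∀ t, (∫ ω, ‖X t ω‖ ^ 2) ≤ C)
    (B : ℤ → H →L[ℝ] ℝ)
    (hB : Summable fun k => ‖B k‖)
    (e : Ω → ℝ)
    (he2 : MemLp e 2)
    (hindep : IndepFun e (fun ω i => Y i ω) volume)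
    (s : ℤ)
    (Z : Ω → ℝ)
    (hZ : ∀ ω, Z ω = (∑' k : ℤ, B k (X (s - k) ω)) + e ω) :
    ∀ᵐ ω ∂(volume : Measure Ω),
      blup Y M⁻¹ Z ω = ∑' k : ℤ, B k (blup Y M⁻¹ (X (s - k)) ω) := by
  obtain ⟨C, hC⟩ := hXbdd
  refine Filter.Eventually.of_forall (blup_eq_tsum_of_hasSum fun j => ?_)
  have hYX (k : ℤ) : Integrable (fun ω => Y j ω • X (s - k) ω) :=
    memLp_one_iff_integrable.mp ((hX2 _).smul (hY2 j))
  have hbound (k : ℤ) : ∫ ω, ‖Y j ω • X (s - k) ω‖ ≤ ((∫ ω, Y j ω ^ 2) + C) / 2 := by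
    have := integral_norm_smul_le_of_memLp_two (hY2 j) (hX2 (s - k))
    linarith [hC (s - k)]
  have hYe_int : Integrable (fun ω => Y j ω • e ω) :=
    memLp_one_iff_integrable.mp (he2.smul (hY2 j))
  have hYe : ∫ ω, Y j ω • e ω = 0 := by
    have hindep_j : IndepFun (Y j) e :=
      (hindep.comp measurable_id (measurable_pi_apply j)).symm
    rw [hindep_j.integral_fun_smul_eq_smul_integral (hY2 j).1 he2.1, hYcent j, zero_smul]
  have hYZ : (fun ω => Y j ω • Z ω) =
      fun ω => (∑' k, B k (Y j ω • X (s - k) ω)) + Y j ω • e ω := by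
    ext ω
    simp only [hZ, map_smul, smul_eq_mul, mul_add, tsum_mul_left]
  rw [hYZ, integral_add (integrable_tsum_clm_apply hB hYX hbound) hYe_int, hYe, add_zero]
  exact hasSum_clm_apply_integral hB hYX hbound

/-- Proposition 2.1: the BLUP of the response of the lagged regression given the
observations equals the filter applied to the BLUPs of the latent regressors. -/
theorem blup_lagged_regression
    {Ω : Type*} [MeasureSpace Ω] [IsProbabilityMeasure (volume : Measure Ω)]
    {H : Type*} [NormedAddCommGroup H] [InnerProductSpace ℝ H] [CompleteSpace H]
    {N : ℕ} (hN : 0 < N)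
    (Y : Fin N → Ω → ℝ)
    (hY2 : ∀ i, MemLp (Y i) 2)
    (hYcent : ∀ i, (∫ ω, Y i ω) = 0)
    (M : Matrix (Fin N) (Fin N) ℝ)
    (hM : ∀ i j, M i j = ∫ ω, Y i ω * Y j ω)
    (hMunit : IsUnit M)
    (X : ℤ → Ω → H)
    (hX2 : ∀ t, MemLp (X t) 2)
    (hXcent : ∀ t, (∫ ω, X t ω) = 0)
    (hXbdd : ∃ C : ℝ, ∀ t, (∫ ω, ‖X t ω‖ ^ 2) ≤ C)
    (B : ℤ → H →L[ℝ] ℝ)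
    (hB : Summable fun k => ‖B k‖)
    (e : Ω → ℝ)
    (he2 : MemLp e 2)
    (hecent : (∫ ω, e ω) = 0)
    (hindep : IndepFun e (fun ω i => Y i ω) volume)
    (s : ℤ)
    (Z : Ω → ℝ)
    (hZ : ∀ ω, Z ω = (∑' k : ℤ, B k (X (s - k) ω)) + e ω) :
    ∀ᵐ ω ∂(volume : Measure Ω),
      blup Y M⁻¹ Z ω = ∑' k : ℤ, B k (blup Y M⁻¹ (X (s - k)) ω) :=
  blup_lagged_regression_general Y hY2 hYcent M X hX2 hXbdd B hB e he2 hindep s Z hZ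
end

section
/- Let E be a Banach space, let (a_h)_{h∈ℤ} be a family in E with Σ_{h∈ℤ} |h| ‖a_h‖ < ∞ (hence also Σ_h ‖a_h‖ < ∞), and let L, T be positive integers with L ≤ T. Then ‖ Σ_{h=−L}^{L} (1 − |h|/T)(1 − |h|/L) a_h − Σ_{h∈ℤ} a_h ‖ ≤ (4/L) Σ_{h∈ℤ} |h| ‖a_h‖; in particular the approximation error is O(1/L) as L → ∞. -/
/-!
Extend the weights by zero outside `|h| ≤ L`, so that the error is `∑' h, (w h - 1) • a h`.
Then `|w h - 1| ≤ 2|h|/L` for every `h`: inside the window, with `u = |h|/T ≤ v = |h|/L ≤ 1`,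
`|(1 - u)(1 - v) - 1| ≤ u + v ≤ 2v`; outside it, `1 ≤ |h|/L`. Hence the error is at most
`(2/L) ∑ |h| ‖a h‖`.
-/

open Finset

theorem norm_tsum_smul_sub_tsum_le {ι E : Type*} [NormedAddCommGroup E] [NormedSpace ℝ E]
    [CompleteSpace E] {a : ι → E} {w m : ι → ℝ} {c : ℝ}
    (ha : Summable a) (hm : Summable fun i => m i * ‖a i‖) (hw : ∀ i, |w i - 1| ≤ c * m i) :
    ‖∑' i, w i • a i - ∑' i, a i‖ ≤ c * ∑' i, m i * ‖a i‖ := by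
  have hbound : ∀ i, ‖(w i - 1) • a i‖ ≤ c * (m i * ‖a i‖) := fun i => by
    rw [norm_smul, Real.norm_eq_abs, ← mul_assoc]
    exact mul_le_mul_of_nonneg_right (hw i) (norm_nonneg _)
  have hdiff : Summable fun i => (w i - 1) • a i := (hm.mul_left c).of_norm_bounded hbound
  have hwa : Summable fun i => w i • a i := by
    simpa only [sub_smul, one_smul, sub_add_cancel] using hdiff.add ha
  rw [← hwa.tsum_sub ha]
  simpa only [sub_smul, one_smul] using tsum_of_norm_bounded (hm.hasSum.mul_left c) hbound

theorem summable_norm_of_summable_abs_mul_norm {E : Type*} [SeminormedAddCommGroup E]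
    {a : ℤ → E} (ha : Summable fun h : ℤ => (|h| : ℝ) * ‖a h‖) : Summable fun h => ‖a h‖ := by
  refine ha.of_norm_bounded_eventually ?_
  filter_upwards [(Set.finite_singleton (0 : ℤ)).compl_mem_cofinite] with h hh
  have h1 : (1 : ℝ) ≤ |(h : ℝ)| := by exact_mod_cast Int.one_le_abs hh
  rw [Real.norm_of_nonneg (norm_nonneg _)]
  exact le_mul_of_one_le_left (norm_nonneg _) h1

theorem abs_one_sub_mul_one_sub_sub_one_le {u v : ℝ} (hu : 0 ≤ u) (hv : 0 ≤ v) (hv1 : v ≤ 1) :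
    |(1 - u) * (1 - v) - 1| ≤ u + v := by
  rw [abs_le]
  constructor <;> nlinarith [mul_nonneg hu hv, mul_le_mul_of_nonneg_left hv1 hu]

noncomputable def bartlettWeight (L T : ℕ) (h : ℤ) : ℝ :=
  if h ∈ Icc (-(L : ℤ)) L then (1 - (|h| : ℝ) / T) * (1 - (|h| : ℝ) / L) else 0

theorem abs_bartlettWeight_sub_one_le {L T : ℕ} (hL : 0 < L) (hLT : L ≤ T) (h : ℤ) :
    |bartlettWeight L T h - 1| ≤ 2 / L * |(h : ℝ)| := by
  have hL' : (0 : ℝ) < L := by exact_mod_cast hL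
  unfold bartlettWeight
  split_ifs with hh
  · have hhL : |(h : ℝ)| ≤ L := by exact_mod_cast abs_le.mpr (mem_Icc.mp hh)
    have hTL : |(h : ℝ)| / T ≤ |(h : ℝ)| / L :=
      div_le_div_of_nonneg_left (abs_nonneg _) hL' (Nat.cast_le.mpr hLT)
    calc |(1 - |(h : ℝ)| / T) * (1 - |(h : ℝ)| / L) - 1| ≤ |(h : ℝ)| / T + |(h : ℝ)| / L :=
          abs_one_sub_mul_one_sub_sub_one_le (by positivity) (by positivity)
            ((div_le_one hL').mpr hhL)
      _ ≤ 2 / L * |(h : ℝ)| := by rw [div_mul_eq_mul_div, two_mul, add_div]; linarith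
  · have hLh : (L : ℝ) ≤ |(h : ℝ)| := by
      have : (L : ℤ) ≤ |h| := le_abs.mpr (by rw [mem_Icc] at hh; omega)
      exact_mod_cast this
    rw [zero_sub, abs_neg, abs_one, div_mul_eq_mul_div, le_div_iff₀ hL']
    linarith

theorem sum_Icc_smul_eq_tsum_bartlettWeight_smul {E : Type*} [AddCommGroup E] [Module ℝ E]
    [TopologicalSpace E] (a : ℤ → E) (L T : ℕ) :
    ∑ h ∈ Icc (-(L : ℤ)) L, ((1 - (|h| : ℝ) / T) * (1 - (|h| : ℝ) / L)) • a h =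
      ∑' h, bartlettWeight L T h • a h := by
  rw [tsum_eq_sum (s := Icc (-(L : ℤ)) L) fun h hh => by simp [bartlettWeight, hh]]
  exact sum_congr rfl fun h hh => by simp [bartlettWeight, hh]

theorem bartlett_weight_bound_rate_general
    {E : Type*} [NormedAddCommGroup E] [NormedSpace ℝ E] [CompleteSpace E]
    (a : ℤ → E) (ha : Summable fun h : ℤ => (|h| : ℝ) * ‖a h‖)
    (L T : ℕ) (hL : 0 < L) (hLT : L ≤ T) :
    ‖(∑ h ∈ Finset.Icc (-(L:ℤ)) (L:ℤ),
        ((1 - (|h| : ℝ) / T) * (1 - (|h| : ℝ) / L)) • a h) - ∑' h : ℤ, a h‖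
      ≤ (4 / (L:ℝ)) * ∑' h : ℤ, (|h| : ℝ) * ‖a h‖ := by
  have hsum : Summable a := (summable_norm_of_summable_abs_mul_norm ha).of_norm
  rw [sum_Icc_smul_eq_tsum_bartlettWeight_smul]
  calc _ ≤ 2 / (L : ℝ) * ∑' h : ℤ, (|h| : ℝ) * ‖a h‖ :=
        norm_tsum_smul_sub_tsum_le hsum ha (abs_bartlettWeight_sub_one_le hL hLT)
    _ ≤ 4 / (L : ℝ) * ∑' h : ℤ, (|h| : ℝ) * ‖a h‖ := by
        gcongr
        norm_num

/-- The rate refinement in the proof of Lemma C.4: if `Σ_h |h|‖a_h‖ < ∞` (hence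
also `Σ_h ‖a_h‖ < ∞`), then the Bartlett-weighted partial sums approximate the
full bilateral series at rate `O(1/L)`:
`‖Σ_{|h|≤L} (1-|h|/T)(1-|h|/L) a_h − Σ_h a_h‖ ≤ (4/L) Σ_h |h|‖a_h‖`. -/
theorem bartlett_weight_bound_rate
    {E : Type*} [NormedAddCommGroup E] [NormedSpace ℝ E] [CompleteSpace E]
    (a : ℤ → E) (ha : Summable fun h : ℤ => (|h| : ℝ) * ‖a h‖)
    (L T : ℕ) (hL : 0 < L) (hT : 0 < T) (hLT : L ≤ T) :
    ‖(∑ h ∈ Finset.Icc (-(L:ℤ)) (L:ℤ),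
        ((1 - (|h| : ℝ) / T) * (1 - (|h| : ℝ) / L)) • a h) - ∑' h : ℤ, a h‖
      ≤ (4 / (L:ℝ)) * ∑' h : ℤ, (|h| : ℝ) * ‖a h‖ :=
  bartlett_weight_bound_rate_general a ha L T hL hLT
end

section
/- Let H be a complex Hilbert space, ρ > 0, and let F and F̂ be bounded self-adjoint positive operators on H. Let B : H → ℂ be a continuous linear functional, set C = B ∘ F, and let Ĉ : H → ℂ be any continuous linear functional. Then ‖ Ĉ ∘ (F̂ + ρI)^{-1} − B ‖ ≤ ‖C − Ĉ‖/ρ + ‖Ĉ‖ · ‖F̂ − F‖ / ρ² + ‖ C ∘ (F + ρI)^{-1} − B ‖, where all norms are operator/functional norms. -/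
/-!
`F + ρI` is coercive with constant `ρ` because `F` is positive, so every right inverse of it has
norm at most `1/ρ`. The resolvent identity
`(F̂ + ρI)⁻¹ - (F + ρI)⁻¹ = (F + ρI)⁻¹ (F - F̂) (F̂ + ρI)⁻¹` then bounds the change of the
regularised inverse by `‖F̂ - F‖/ρ²`, and the theorem is the triangle inequality applied to
`Ĉ R̂ - B = (Ĉ - C) R + Ĉ (R̂ - R) + (C R - B)`, where `R`, `R̂` are the two inverses.
-/

open RCLike

theorem sub_eq_mul_sub_mul_of_mul_eq_one {R : Type*} [Ring R] {a a' b b' : R}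
    (ha : a * a' = 1) (hb : b' * b = 1) : a' - b' = b' * (b - a) * a' := by
  rw [mul_sub, sub_mul, mul_assoc b' a, ha, hb, one_mul, mul_one]

theorem norm_sub_le_of_mul_eq_one {R : Type*} [NormedRing R] {a a' b b' : R}
    (ha : a * a' = 1) (hb : b' * b = 1) : ‖a' - b'‖ ≤ ‖b'‖ * ‖b - a‖ * ‖a'‖ := by
  rw [sub_eq_mul_sub_mul_of_mul_eq_one ha hb]
  exact (norm_mul_le _ _).trans (by gcongr; exact norm_mul_le _ _)

section Coercive

variable {𝕜 E : Type*} [RCLike 𝕜] [NormedAddCommGroup E] [InnerProductSpace 𝕜 E]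

theorem mul_norm_le_norm_apply_of_coercive {A : E →L[𝕜] E} {ρ : ℝ}
    (hA : ∀ y, ρ * ‖y‖ ^ 2 ≤ re (inner 𝕜 (A y) y)) (y : E) : ρ * ‖y‖ ≤ ‖A y‖ := by
  rcases (norm_nonneg y).eq_or_lt with hy | hy
  · rw [← hy, mul_zero]
    exact norm_nonneg _
  · have : ρ * ‖y‖ * ‖y‖ ≤ ‖A y‖ * ‖y‖ := by
      rw [mul_assoc, ← sq]
      exact (hA y).trans (re_inner_le_norm _ _)
    exact le_of_mul_le_mul_right this hy

theorem norm_le_inv_of_coercive_of_mul_eq_one {A R : E →L[𝕜] E} {ρ : ℝ} (hρ : 0 < ρ)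
    (hA : ∀ y, ρ * ‖y‖ ^ 2 ≤ re (inner 𝕜 (A y) y)) (hAR : A * R = 1) : ‖R‖ ≤ ρ⁻¹ := by
  refine ContinuousLinearMap.opNorm_le_bound _ (inv_nonneg.mpr hρ.le) fun x => ?_
  have h := mul_norm_le_norm_apply_of_coercive hA (R x)
  rw [← mul_apply_eq_comp, hAR, one_apply_eq_self] at h
  rwa [inv_mul_eq_div, le_div_iff₀' hρ]

theorem coercive_add_smul_one {F : E →L[𝕜] E} (hF : ∀ y, 0 ≤ re (inner 𝕜 (F y) y)) (ρ : ℝ)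
    (y : E) : ρ * ‖y‖ ^ 2 ≤ re (inner 𝕜 ((F + (ρ : 𝕜) • (1 : E →L[𝕜] E)) y) y) := by
  rw [add_apply, smul_apply, one_apply_eq_self, inner_add_left, inner_smul_left, map_add,
    conj_ofReal, re_ofReal_mul, inner_self_eq_norm_sq]
  linarith [hF y]

theorem norm_inv_add_smul_one_le {F R : E →L[𝕜] E} (hF : ∀ y, 0 ≤ re (inner 𝕜 (F y) y))
    {ρ : ℝ} (hρ : 0 < ρ) (hR : (F + (ρ : 𝕜) • (1 : E →L[𝕜] E)).comp R = 1) : ‖R‖ ≤ ρ⁻¹ :=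
  norm_le_inv_of_coercive_of_mul_eq_one hρ (coercive_add_smul_one hF ρ) hR

end Coercive

theorem tikhonov_error_decomposition_general
    {H : Type*} [NormedAddCommGroup H] [InnerProductSpace ℂ H]
    (ρ : ℝ) (hρ : 0 < ρ)
    (F Fhat : H →L[ℂ] H)
    (hFpos : ∀ f : H, 0 ≤ (inner ℂ (F f) f : ℂ).re)
    (hFhatpos : ∀ f : H, 0 ≤ (inner ℂ (Fhat f) f : ℂ).re)
    (Finv Fhatinv : H →L[ℂ] H)
    (hFinv₁ : (F + (ρ : ℂ) • (1 : H →L[ℂ] H)).comp Finv = 1)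
    (hFinv₂ : Finv.comp (F + (ρ : ℂ) • (1 : H →L[ℂ] H)) = 1)
    (hFhinv₁ : (Fhat + (ρ : ℂ) • (1 : H →L[ℂ] H)).comp Fhatinv = 1)
    (B Chat : H →L[ℂ] ℂ) :
    ‖Chat.comp Fhatinv - B‖
      ≤ ‖B.comp F - Chat‖ / ρ + ‖Chat‖ * ‖Fhat - F‖ / ρ ^ 2
        + ‖(B.comp F).comp Finv - B‖ := by
  have hR : ‖Finv‖ ≤ ρ⁻¹ := norm_inv_add_smul_one_le hFpos hρ hFinv₁
  have hRhat : ‖Fhatinv‖ ≤ ρ⁻¹ := norm_inv_add_smul_one_le hFhatpos hρ hFhinv₁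
  have hdiff : ‖Fhatinv - Finv‖ ≤ ‖Fhat - F‖ / ρ ^ 2 := by
    have h := norm_sub_le_of_mul_eq_one (a' := Fhatinv) (b' := Finv) hFhinv₁ hFinv₂
    rw [add_sub_add_right_eq_sub, norm_sub_rev F Fhat] at h
    calc ‖Fhatinv - Finv‖ ≤ ρ⁻¹ * ‖Fhat - F‖ * ρ⁻¹ := h.trans (by gcongr)
      _ = ‖Fhat - F‖ / ρ ^ 2 := by field_simp
  calc ‖Chat.comp Fhatinv - B‖
      = ‖(Chat - B.comp F).comp Finv + Chat.comp (Fhatinv - Finv)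
          + ((B.comp F).comp Finv - B)‖ := by
        rw [ContinuousLinearMap.sub_comp, ContinuousLinearMap.comp_sub]; abel_nf
    _ ≤ ‖Chat - B.comp F‖ * ‖Finv‖ + ‖Chat‖ * ‖Fhatinv - Finv‖ + ‖(B.comp F).comp Finv - B‖ :=
        (norm_add₃_le).trans (by gcongr <;> exact ContinuousLinearMap.opNorm_comp_le _ _)
    _ ≤ ‖B.comp F - Chat‖ / ρ + ‖Chat‖ * ‖Fhat - F‖ / ρ ^ 2 + ‖(B.comp F).comp Finv - B‖ := by
        rw [norm_sub_rev, div_eq_mul_inv, mul_div_assoc]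
        gcongr

/-- The deterministic error decomposition at the heart of the proof of
Theorem 3.1: with `F`, `F̂` bounded self-adjoint positive operators on a complex
Hilbert space, `ρ > 0` (with two-sided inverses `Finv` of `F + ρI` and `Fhatinv`
of `F̂ + ρI`), `B : H → ℂ` a continuous linear functional, `C = B ∘ F`, and `Ĉ`
any continuous linear functional,
`‖Ĉ ∘ (F̂+ρI)⁻¹ − B‖ ≤ ‖C−Ĉ‖/ρ + ‖Ĉ‖‖F̂−F‖/ρ² + ‖C ∘ (F+ρI)⁻¹ − B‖`. -/
theorem tikhonov_error_decomposition
    {H : Type*} [NormedAddCommGroup H] [InnerProductSpace ℂ H] [CompleteSpace H]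
    (ρ : ℝ) (hρ : 0 < ρ)
    (F Fhat : H →L[ℂ] H)
    (hF : IsSelfAdjoint F) (hFpos : ∀ f : H, 0 ≤ (inner ℂ (F f) f : ℂ).re)
    (hFhat : IsSelfAdjoint Fhat) (hFhatpos : ∀ f : H, 0 ≤ (inner ℂ (Fhat f) f : ℂ).re)
    (Finv Fhatinv : H →L[ℂ] H)
    (hFinv₁ : (F + (ρ : ℂ) • (1 : H →L[ℂ] H)).comp Finv = 1)
    (hFinv₂ : Finv.comp (F + (ρ : ℂ) • (1 : H →L[ℂ] H)) = 1)
    (hFhinv₁ : (Fhat + (ρ : ℂ) • (1 : H →L[ℂ] H)).comp Fhatinv = 1)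
    (hFhinv₂ : Fhatinv.comp (Fhat + (ρ : ℂ) • (1 : H →L[ℂ] H)) = 1)
    (B Chat : H →L[ℂ] ℂ) :
    ‖Chat.comp Fhatinv - B‖
      ≤ ‖B.comp F - Chat‖ / ρ + ‖Chat‖ * ‖Fhat - F‖ / ρ ^ 2
        + ‖(B.comp F).comp Finv - B‖ :=
  tikhonov_error_decomposition_general ρ hρ F Fhat hFpos hFhatpos Finv Fhatinv hFinv₁ hFinv₂ hFhinv₁
    B Chat
end

section
/- Let H be a separable complex Hilbert space, (φ_j)_{j∈ℕ} a Hilbert basis of H, (λ_j)_{j∈ℕ} nonnegative reals with sup_j λ_j < ∞, and F the bounded self-adjoint positive operator with F φ_j = λ_j φ_j for all j. Let B : H → ℂ be a continuous linear functional and ρ > 0. Then ‖ B ∘ F ∘ (F + ρI)^{-1} − B ‖² ≤ Σ_{j∈ℕ} ( ρ / (λ_j + ρ) )² |B(φ_j)|², where ‖·‖ is the norm of continuous linear functionals on H and Σ_j |B(φ_j)|² = ‖B‖² < ∞ by Parseval's identity. -/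
/-!
Both `B ∘ F ∘ (F + ρI)⁻¹ - B` and `B` are functionals, so by Riesz and Parseval their squared
norms are the sums of their squared values on the Hilbert basis. On `φ j` the operator
`F (F + ρI)⁻¹ - I` acts as multiplication by `λ_j / (λ_j + ρ) - 1 = -ρ / (λ_j + ρ)`, which gives
the bound (with equality). The eigenvalue `λ_j + ρ` of `F + ρI` is nonzero because `F + ρI` has a
left inverse.
-/

open scoped InnerProductSpace

theorem HilbertBasis.hasSum_norm_sq_apply {ι 𝕜 E : Type*} [RCLike 𝕜] [NormedAddCommGroup E]
    [InnerProductSpace 𝕜 E] [CompleteSpace E] (b : HilbertBasis ι 𝕜 E) (L : E →L[𝕜] 𝕜) :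
    HasSum (fun i => ‖L (b i)‖ ^ 2) (‖L‖ ^ 2) := by
  set v := (InnerProductSpace.toDual 𝕜 E).symm L
  have hL : ∀ x, L x = ⟪v, x⟫_𝕜 := fun x => (InnerProductSpace.toDual_symm_apply).symm
  have hv : ‖v‖ = ‖L‖ := (InnerProductSpace.toDual 𝕜 E).symm.norm_map L
  have := lp.hasSum_norm (p := 2) (by norm_num) (b.repr v)
  simp only [ENNReal.toReal_ofNat, Real.rpow_two, LinearIsometryEquiv.norm_map, hv,
    b.repr_apply_apply] at this
  simpa only [hL, ← inner_conj_symm (b _) v, RCLike.norm_conj] using this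

theorem ContinuousLinearMap.apply_eq_inv_smul_of_comp_eq_one {K M : Type*} [Field K]
    [TopologicalSpace M] [AddCommGroup M] [Module K M] {S T : M →L[K] M} (hST : S.comp T = 1)
    {x : M} {c : K} (hx : T x = c • x) (hx0 : x ≠ 0) : c ≠ 0 ∧ S x = c⁻¹ • x := by
  have hcx : c • S x = x := by rw [← map_smul, ← hx, ← comp_apply, hST, one_apply_eq_self]
  have hc : c ≠ 0 := by
    rintro rfl
    exact hx0 (by simpa using hcx.symm)
  exact ⟨hc, by rw [← inv_smul_smul₀ hc (S x), hcx]⟩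

theorem ContinuousLinearMap.apply_resolvent_sub_self {K M : Type*} [Field K]
    [TopologicalSpace M] [AddCommGroup M] [Module K M] [ContinuousAdd M] [ContinuousConstSMul K M]
    {F Finv : M →L[K] M} {r : K} (hinv : Finv.comp (F + r • 1) = 1) {x : M} {a : K}
    (hx : F x = a • x) (hx0 : x ≠ 0) : F (Finv x) - x = -(r / (a + r)) • x := by
  obtain ⟨hne, hFinv⟩ := apply_eq_inv_smul_of_comp_eq_one hinv (x := x) (c := a + r)
    (by simp [hx, add_smul]) hx0
  rw [hFinv, map_smul, hx, smul_smul]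
  nth_rewrite 2 [← one_smul K x]
  rw [← sub_smul]
  congr 1
  field_simp
  ring

open ContinuousLinearMap in
theorem tikhonov_bias_bound_general
    {H : Type*} [NormedAddCommGroup H] [InnerProductSpace ℂ H] [CompleteSpace H]
    (φ : HilbertBasis ℕ ℂ H)
    (lam : ℕ → ℝ)
    (F : H →L[ℂ] H) (hF : ∀ j, F (φ j) = (lam j : ℂ) • φ j)
    (ρ : ℝ)
    (Finv : H →L[ℂ] H)
    (hFinv₂ : Finv.comp (F + (ρ : ℂ) • (1 : H →L[ℂ] H)) = 1)
    (B : H →L[ℂ] ℂ) :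
    (Summable fun j : ℕ => ‖B (φ j)‖ ^ 2) ∧
    (∑' j : ℕ, ‖B (φ j)‖ ^ 2) = ‖B‖ ^ 2 ∧
    ‖B.comp (F.comp Finv) - B‖ ^ 2
      ≤ ∑' j : ℕ, (ρ / (lam j + ρ)) ^ 2 * ‖B (φ j)‖ ^ 2 := by
  have hB := φ.hasSum_norm_sq_apply B
  refine ⟨hB.summable, hB.tsum_eq, le_of_eq ?_⟩
  have hbias (j : ℕ) :
      (B.comp (F.comp Finv) - B) (φ j) = ((-(ρ / (lam j + ρ)) : ℝ) : ℂ) * B (φ j) := by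
    rw [sub_apply, comp_apply, comp_apply, ← map_sub,
      apply_resolvent_sub_self hFinv₂ (hF j) (φ.orthonormal.ne_zero j), map_smul, smul_eq_mul]
    push_cast
    ring
  rw [← (φ.hasSum_norm_sq_apply _).tsum_eq]
  refine tsum_congr fun j => ?_
  rw [hbias, norm_mul, mul_pow, Complex.norm_real, Real.norm_eq_abs, sq_abs, neg_sq]

/-- The bound (C.12) on the deterministic Tikhonov regularisation bias `𝓢₃` in
the proof of Theorem 3.1: with `F` diagonalised by the Hilbert basis `(φ_j)`
with nonnegative bounded eigenvalues `λ_j`, `ρ > 0` (`Finv` the two-sided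
inverse of `F + ρI`), and `B : H → ℂ` a continuous linear functional,
`‖B ∘ F ∘ (F+ρI)⁻¹ − B‖² ≤ Σ_j (ρ/(λ_j+ρ))² |B(φ_j)|²`, where
`Σ_j |B(φ_j)|² = ‖B‖² < ∞` by Parseval's identity. -/
theorem tikhonov_bias_bound
    {H : Type*} [NormedAddCommGroup H] [InnerProductSpace ℂ H] [CompleteSpace H]
    (φ : HilbertBasis ℕ ℂ H)
    (lam : ℕ → ℝ) (hlam : ∀ j, 0 ≤ lam j) (hbdd : BddAbove (Set.range lam))
    (F : H →L[ℂ] H) (hF : ∀ j, F (φ j) = (lam j : ℂ) • φ j)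
    (ρ : ℝ) (hρ : 0 < ρ)
    (Finv : H →L[ℂ] H)
    (hFinv₁ : (F + (ρ : ℂ) • (1 : H →L[ℂ] H)).comp Finv = 1)
    (hFinv₂ : Finv.comp (F + (ρ : ℂ) • (1 : H →L[ℂ] H)) = 1)
    (B : H →L[ℂ] ℂ) :
    (Summable fun j : ℕ => ‖B (φ j)‖ ^ 2) ∧
    (∑' j : ℕ, ‖B (φ j)‖ ^ 2) = ‖B‖ ^ 2 ∧
    ‖B.comp (F.comp Finv) - B‖ ^ 2
      ≤ ∑' j : ℕ, (ρ / (lam j + ρ)) ^ 2 * ‖B (φ j)‖ ^ 2 :=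
  tikhonov_bias_bound_general φ lam F hF ρ Finv hFinv₂ B
end

section
/- Let H be a separable complex Hilbert space, (φ_j)_{j∈ℕ} a Hilbert basis of H, (λ_j)_{j∈ℕ} strictly positive reals with sup_j λ_j < ∞, and F the bounded self-adjoint positive injective operator with F φ_j = λ_j φ_j for all j. Let B : H → ℂ be a continuous linear functional. Then ‖ B ∘ F ∘ (F + ρI)^{-1} − B ‖ → 0 as ρ → 0⁺ (limit along positive ρ tending to 0), where ‖·‖ is the norm of continuous linear functionals on H. -/
/-!
The bias functional `C_ρ = B ∘ F ∘ (F + ρ)⁻¹ - B` multiplies `B φ_j` by `-ρ / (λ_j + ρ)`, so by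
Parseval's identity for functionals `‖C_ρ‖² = ∑ⱼ (ρ / (λ_j + ρ))² ‖B φ_j‖²`. Each factor lies in
`[0, 1]` and tends to `0` because `λ_j > 0`, so dominated convergence against the summable
`∑ⱼ ‖B φ_j‖² = ‖B‖²` gives the limit.
-/

open Filter Topology

namespace HilbertBasis

variable {ι 𝕜 E : Type*} [RCLike 𝕜] [NormedAddCommGroup E] [InnerProductSpace 𝕜 E]
  [CompleteSpace E]

theorem hasSum_norm_sq_apply_s13 (b : HilbertBasis ι 𝕜 E) (C : StrongDual 𝕜 E) :
    HasSum (fun i => ‖C (b i)‖ ^ 2) (‖C‖ ^ 2) := by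
  set v := (InnerProductSpace.toDual 𝕜 E).symm C
  have hcoeff : ∀ i, ‖C (b i)‖ = ‖b.repr v i‖ := fun i => by
    rw [b.repr_apply_apply, ← InnerProductSpace.toDual_symm_apply, norm_inner_symm]
  have hnorm : ‖C‖ = ‖b.repr v‖ := by simp [v]
  simpa [hcoeff, hnorm] using lp.hasSum_norm (p := 2) (by norm_num) (b.repr v)

end HilbertBasis

namespace ContinuousLinearMap

variable {𝕜 E : Type*} [NormedField 𝕜] [NormedAddCommGroup E] [NormedSpace 𝕜 E]

theorem apply_eq_inv_smul_of_comp_add_smul_eq_one {F R : E →L[𝕜] E} {c μ : 𝕜}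
    (h : R.comp (F + c • 1) = 1) {v : E} (hv : F v = μ • v) (hμc : μ + c ≠ 0) :
    R v = (μ + c)⁻¹ • v := by
  have hRv : R ((μ + c) • v) = v := by simpa [hv, add_smul] using congr($h v)
  rw [map_smul] at hRv
  exact (eq_inv_smul_iff₀ hμc).mpr hRv

theorem comp_comp_sub_apply_of_apply_eq_smul (B : StrongDual 𝕜 E) {F R : E →L[𝕜] E} {c μ : 𝕜}
    (h : R.comp (F + c • 1) = 1) {v : E} (hv : F v = μ • v) (hμc : μ + c ≠ 0) :
    (B.comp (F.comp R) - B) v = -(c / (μ + c)) * B v := by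
  have hFRv : F (R v) = (μ / (μ + c)) • v := by
    rw [apply_eq_inv_smul_of_comp_add_smul_eq_one h hv hμc, map_smul, hv, smul_smul,
      inv_mul_eq_div]
  have hcoeff : μ / (μ + c) - 1 = -(c / (μ + c)) := by field_simp; ring
  simp only [sub_apply, coe_comp, Function.comp_apply, hFRv, map_smul, smul_eq_mul]
  rw [← hcoeff, sub_mul, one_mul]

end ContinuousLinearMap

theorem tendsto_tsum_div_add_sq_mul_nhdsGT_zero {β : Type*} {lam a : β → ℝ}
    (hlam : ∀ j, 0 < lam j) (ha : Summable a) :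
    Tendsto (fun ρ => ∑' j, (ρ / (lam j + ρ)) ^ 2 * a j) (𝓝[>] 0) (𝓝 0) := by
  have hlim : ∀ j, Tendsto (fun ρ => (ρ / (lam j + ρ)) ^ 2 * a j) (𝓝[>] 0) (𝓝 0) := by
    intro j
    have hcont : ContinuousAt (fun ρ => (ρ / (lam j + ρ)) ^ 2 * a j) 0 :=
      ((continuousAt_id.div (continuousAt_const.add continuousAt_id)
        (by simpa using (hlam j).ne')).pow 2).mul continuousAt_const
    simpa using hcont.tendsto.mono_left nhdsWithin_le_nhds
  have hbound : ∀ᶠ ρ in 𝓝[>] (0 : ℝ), ∀ j, ‖(ρ / (lam j + ρ)) ^ 2 * a j‖ ≤ |a j| := by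
    filter_upwards [self_mem_nhdsWithin] with ρ (hρ : 0 < ρ) j
    have hratio : |ρ / (lam j + ρ)| ≤ 1 := by
      have hpos : 0 < lam j + ρ := by linarith [hlam j]
      rw [abs_of_pos (div_pos hρ hpos)]
      exact (div_le_one hpos).mpr (by linarith [hlam j])
    rw [Real.norm_eq_abs, abs_mul, abs_pow]
    exact mul_le_of_le_one_left (abs_nonneg _) (pow_le_one₀ (abs_nonneg _) hratio)
  simpa using tendsto_tsum_of_dominated_convergence ha.abs hlim hbound

theorem tikhonov_bias_tendsto_zero_general
    {H : Type*} [NormedAddCommGroup H] [InnerProductSpace ℂ H] [CompleteSpace H]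
    (φ : HilbertBasis ℕ ℂ H)
    (lam : ℕ → ℝ) (hlam : ∀ j, 0 < lam j)
    (F : H →L[ℂ] H) (hF : ∀ j, F (φ j) = (lam j : ℂ) • φ j)
    (Finv : ℝ → H →L[ℂ] H)
    (hFinv₂ : ∀ ρ : ℝ, 0 < ρ → (Finv ρ).comp (F + (ρ : ℂ) • (1 : H →L[ℂ] H)) = 1)
    (B : H →L[ℂ] ℂ) :
    Filter.Tendsto (fun ρ : ℝ => ‖B.comp (F.comp (Finv ρ)) - B‖)
      (nhdsWithin 0 (Set.Ioi 0)) (nhds 0) := by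
  have hcoeff : ∀ ρ : ℝ, 0 < ρ → ∀ j, ‖(B.comp (F.comp (Finv ρ)) - B) (φ j)‖ ^ 2 =
      (ρ / (lam j + ρ)) ^ 2 * ‖B (φ j)‖ ^ 2 := by
    intro ρ hρ j
    have hpos : 0 < lam j + ρ := by linarith [hlam j]
    rw [B.comp_comp_sub_apply_of_apply_eq_smul (hFinv₂ ρ hρ) (hF j)
        (by exact_mod_cast hpos.ne'), ← Complex.ofReal_add, ← Complex.ofReal_div, norm_mul,
      norm_neg, Complex.norm_real, Real.norm_eq_abs, mul_pow, sq_abs]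
  have hsq : Tendsto (fun ρ : ℝ => ‖B.comp (F.comp (Finv ρ)) - B‖ ^ 2) (𝓝[>] 0) (𝓝 0) := by
    refine (tendsto_tsum_div_add_sq_mul_nhdsGT_zero hlam
      (φ.hasSum_norm_sq_apply_s13 B).summable).congr' ?_
    filter_upwards [self_mem_nhdsWithin] with ρ hρ
    rw [← (φ.hasSum_norm_sq_apply_s13 _).tsum_eq]
    exact tsum_congr fun j => (hcoeff ρ hρ j).symm
  simpa [Real.sqrt_sq (norm_nonneg _)] using hsq.sqrt

/-- Convergence of the deterministic Tikhonov regularisation bias `𝓢₃` to zero,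
concluding the proof of Theorem 3.1: with `F` the bounded self-adjoint positive
injective operator diagonalised by the Hilbert basis `(φ_j)` with strictly
positive bounded eigenvalues `λ_j` (and `Finv ρ` the two-sided inverse of
`F + ρI` for each `ρ > 0`), and `B : H → ℂ` a continuous linear functional,
`‖B ∘ F ∘ (F+ρI)⁻¹ − B‖ → 0` as `ρ → 0⁺`. -/
theorem tikhonov_bias_tendsto_zero
    {H : Type*} [NormedAddCommGroup H] [InnerProductSpace ℂ H] [CompleteSpace H]
    (φ : HilbertBasis ℕ ℂ H)
    (lam : ℕ → ℝ) (hlam : ∀ j, 0 < lam j) (hbdd : BddAbove (Set.range lam))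
    (F : H →L[ℂ] H) (hF : ∀ j, F (φ j) = (lam j : ℂ) • φ j)
    (Finv : ℝ → H →L[ℂ] H)
    (hFinv₁ : ∀ ρ : ℝ, 0 < ρ → (F + (ρ : ℂ) • (1 : H →L[ℂ] H)).comp (Finv ρ) = 1)
    (hFinv₂ : ∀ ρ : ℝ, 0 < ρ → (Finv ρ).comp (F + (ρ : ℂ) • (1 : H →L[ℂ] H)) = 1)
    (B : H →L[ℂ] ℂ) :
    Filter.Tendsto (fun ρ : ℝ => ‖B.comp (F.comp (Finv ρ)) - B‖)
      (nhdsWithin 0 (Set.Ioi 0)) (nhds 0) :=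
  tikhonov_bias_tendsto_zero_general φ lam hlam F hF Finv hFinv₂ B
end
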